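/- Let ℓ ≥ 1, γ ∈ (0,1), let T ∈ ℝ^{ℓ×ℓ} be a row-stochastic matrix (all entries nonnegative, each row summing to 1) that is irreducible (for every pair of indices (i,j) there exists n ≥ 1 with (T^n)_{ij} > 0), and let ϖ ∈ ℝ^ℓ satisfy 0 < ϖ_k ≤ 1 for all k. Set Π = diag(ϖ) and H = Π^{1/2}(I − γT). Then H is invertible and the symmetric positive definite matrix HᵀH has smallest eigenvalue λ_min(HᵀH) satisfying 0 < λ_min(HᵀH) ≤ (1 − γ)². -/

import Mathlib

/-!
Because `T` is row-stochastic and `γ < 1`, the matrix `I - γT` is strictly diagonally dominant,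
hence invertible by Gershgorin's theorem; so is `H`, and `HᵀH` is positive definite.
For the upper bound, test the Rayleigh quotient of `HᵀH` at the all-ones vector `𝟙`:
`(I - γT) 𝟙 = (1 - γ) 𝟙`, so `𝟙ᵀ HᵀH 𝟙 = (1 - γ)² ∑ ϖ_k ≤ (1 - γ)² ‖𝟙‖²`, and the smallest
eigenvalue is at most any Rayleigh quotient.
-/

open Matrix

theorem transpose_mul_self_isHermitian (ℓ : ℕ) (H : Matrix (Fin ℓ) (Fin ℓ) ℝ) :
    (Hᵀ * H).IsHermitian := by
  simpa [Matrix.conjTranspose_eq_transpose_of_trivial] using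
    Matrix.isHermitian_conjTranspose_mul_self H

namespace Matrix

theorem dotProduct_transpose_mul_self_mulVec {m n : Type*} [Fintype m] [Fintype n]
    (A : Matrix m n ℝ) (x : n → ℝ) : x ⬝ᵥ (Aᵀ * A) *ᵥ x = (A *ᵥ x) ⬝ᵥ (A *ᵥ x) := by
  rw [← mulVec_mulVec, dotProduct_mulVec, vecMul_transpose]

variable {n : Type*} [Fintype n] [DecidableEq n]

theorem det_one_sub_smul_ne_zero {T : Matrix n n ℝ} (hT : ∀ i j, 0 ≤ T i j)
    (hrow : ∀ i, ∑ j, T i j ≤ 1) {γ : ℝ} (hγ₀ : 0 ≤ γ) (hγ₁ : γ < 1) :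
    (1 - γ • T).det ≠ 0 := by
  refine det_ne_zero_of_sum_row_lt_diag fun k => ?_
  have hTkk : T k k ≤ 1 :=
    (Finset.single_le_sum (fun j _ => hT k j) (Finset.mem_univ k)).trans (hrow k)
  have hoff : ∑ j ∈ Finset.univ.erase k, T k j = ∑ j, T k j - T k k := by
    rw [← Finset.sum_erase_add _ _ (Finset.mem_univ k), add_sub_cancel_right]
  calc ∑ j ∈ Finset.univ.erase k, ‖(1 - γ • T) k j‖
      = γ * ∑ j ∈ Finset.univ.erase k, T k j := by
        rw [Finset.mul_sum]
        refine Finset.sum_congr rfl fun j hj => ?_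
        rw [sub_apply, one_apply_ne' (Finset.ne_of_mem_erase hj), smul_apply, smul_eq_mul,
          zero_sub, norm_neg, Real.norm_of_nonneg (mul_nonneg hγ₀ (hT k j))]
    _ < 1 - γ * T k k := by rw [hoff]; nlinarith [hrow k]
    _ = ‖(1 - γ • T) k k‖ := by
        rw [sub_apply, one_apply_eq, smul_apply, smul_eq_mul,
          Real.norm_of_nonneg (by nlinarith)]

theorem IsHermitian.posSemidef_sub_smul_one {M : Matrix n n ℝ} (hM : M.IsHermitian) {c : ℝ}
    (hc : ∀ i, c ≤ hM.eigenvalues i) : (M - c • 1).PosSemidef := by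
  have hdiag : M - c • 1 = Unitary.conjStarAlgAut ℝ _ hM.eigenvectorUnitary
      (diagonal fun i => hM.eigenvalues i - c) := by
    conv_lhs => rw [hM.spectral_theorem]
    rw [← map_one (Unitary.conjStarAlgAut ℝ _ hM.eigenvectorUnitary), ← map_smul, ← map_sub,
      ← diagonal_one, ← diagonal_smul, diagonal_sub]
    congr; ext i; simp
  rw [hdiag, Unitary.conjStarAlgAut_apply]
  exact (posSemidef_diagonal_iff.mpr fun i => sub_nonneg.mpr (hc i)).mul_mul_conjTranspose_same _

theorem IsHermitian.exists_eigenvalues_le {M : Matrix n n ℝ} (hM : M.IsHermitian) {x : n → ℝ}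
    (hx : x ≠ 0) {c : ℝ} (hxMx : x ⬝ᵥ M *ᵥ x ≤ c * (x ⬝ᵥ x)) : ∃ i, hM.eigenvalues i ≤ c := by
  obtain ⟨k, -⟩ := Function.ne_iff.mp hx
  obtain ⟨i, -, hi⟩ := Finset.exists_min_image Finset.univ hM.eigenvalues ⟨k, Finset.mem_univ k⟩
  have hpos : 0 < x ⬝ᵥ x := by simpa using dotProduct_star_self_pos_iff.mpr hx
  have hmin :=
    (hM.posSemidef_sub_smul_one fun j => hi j (Finset.mem_univ j)).dotProduct_mulVec_nonneg x
  simp only [star_trivial, sub_mulVec, dotProduct_sub, smul_mulVec, one_mulVec,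
    dotProduct_smul, smul_eq_mul, sub_nonneg] at hmin
  exact ⟨i, le_of_mul_le_mul_right (hmin.trans hxMx) hpos⟩

theorem one_sub_smul_mulVec_const_one {T : Matrix n n ℝ} (hrow : ∀ i, ∑ j, T i j = 1) (γ : ℝ) :
    (1 - γ • T) *ᵥ (fun _ => 1) = fun _ => 1 - γ := by
  rw [sub_mulVec, one_mulVec, smul_mulVec]
  ext i
  simp [mulVec, dotProduct, hrow i]

end Matrix

theorem stmt_18_general (ℓ : ℕ) (hℓ : 1 ≤ ℓ) (γ : ℝ) (hγ : γ ∈ Set.Ioo (0 : ℝ) 1)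
    (T : Matrix (Fin ℓ) (Fin ℓ) ℝ)
    (hTnonneg : ∀ i j, 0 ≤ T i j)
    (hTrow : ∀ i, ∑ j, T i j = 1)
    (ϖ : Fin ℓ → ℝ) (hϖ : ∀ k, 0 < ϖ k ∧ ϖ k ≤ 1) :
    IsUnit (Matrix.diagonal (fun k => Real.sqrt (ϖ k))
        * ((1 : Matrix (Fin ℓ) (Fin ℓ) ℝ) - γ • T)) ∧
    ((Matrix.diagonal (fun k => Real.sqrt (ϖ k))
        * ((1 : Matrix (Fin ℓ) (Fin ℓ) ℝ) - γ • T))ᵀ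
      * (Matrix.diagonal (fun k => Real.sqrt (ϖ k))
        * ((1 : Matrix (Fin ℓ) (Fin ℓ) ℝ) - γ • T))).PosDef ∧
    (∀ i : Fin ℓ, 0 < (transpose_mul_self_isHermitian ℓ
        (Matrix.diagonal (fun k => Real.sqrt (ϖ k))
          * ((1 : Matrix (Fin ℓ) (Fin ℓ) ℝ) - γ • T))).eigenvalues i) ∧
    (∃ i : Fin ℓ, (transpose_mul_self_isHermitian ℓ
        (Matrix.diagonal (fun k => Real.sqrt (ϖ k))
          * ((1 : Matrix (Fin ℓ) (Fin ℓ) ℝ) - γ • T))).eigenvalues i ≤ (1 - γ) ^ 2) := by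
  set H := diagonal (fun k => √(ϖ k)) * (1 - γ • T)
  have hdet := det_one_sub_smul_ne_zero hTnonneg (fun i => (hTrow i).le) hγ.1.le hγ.2
  have hH : IsUnit H := by
    rw [isUnit_iff_isUnit_det, det_mul, det_diagonal, isUnit_iff_ne_zero]
    exact mul_ne_zero
      (Finset.prod_ne_zero_iff.mpr fun k _ => (Real.sqrt_pos.mpr (hϖ k).1).ne') hdet
  have hPD : (Hᵀ * H).PosDef := by
    simpa [conjTranspose_eq_transpose_of_trivial] using
      PosDef.conjTranspose_mul_self H (mulVec_injective_of_isUnit hH)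
  refine ⟨hH, hPD, hPD.eigenvalues_pos, IsHermitian.exists_eigenvalues_le _ (x := fun _ => 1)
    (Function.ne_iff.mpr ⟨⟨0, hℓ⟩, one_ne_zero⟩) ?_⟩
  have hHx : H *ᵥ (fun _ => 1) = fun k => √(ϖ k) * (1 - γ) := by
    rw [← mulVec_mulVec, one_sub_smul_mulVec_const_one hTrow]
    ext k
    exact mulVec_diagonal _ _ k
  calc (fun _ => 1) ⬝ᵥ (Hᵀ * H) *ᵥ (fun _ => 1) = ∑ k, ϖ k * (1 - γ) ^ 2 := by
        rw [dotProduct_transpose_mul_self_mulVec, hHx]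
        refine Finset.sum_congr rfl fun k _ => ?_
        rw [← Real.sq_sqrt (hϖ k).1.le]
        ring
    _ ≤ ∑ _k : Fin ℓ, 1 * (1 - γ) ^ 2 :=
        Finset.sum_le_sum fun k _ => mul_le_mul_of_nonneg_right (hϖ k).2 (sq_nonneg _)
    _ = (1 - γ) ^ 2 * ((fun _ => 1) ⬝ᵥ (fun _ => 1)) := by simp [dotProduct, mul_comm]

/-- Let `ℓ ≥ 1`, `γ ∈ (0,1)`, `T` a row-stochastic irreducible
`ℓ×ℓ` matrix, and `ϖ` with `0 < ϖ_k ≤ 1`.  Set `Π = diag(ϖ)` and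
`H = Π^{1/2}(I − γT)`.  Then `H` is invertible and the symmetric positive definite
matrix `HᵀH` has smallest eigenvalue in `(0, (1−γ)²]`: all its eigenvalues are positive
and some eigenvalue is `≤ (1−γ)²`. -/
theorem stmt_18 (ℓ : ℕ) (hℓ : 1 ≤ ℓ) (γ : ℝ) (hγ : γ ∈ Set.Ioo (0 : ℝ) 1)
    (T : Matrix (Fin ℓ) (Fin ℓ) ℝ)
    (hTnonneg : ∀ i j, 0 ≤ T i j)
    (hTrow : ∀ i, ∑ j, T i j = 1)
    (hTirr : ∀ i j, ∃ n : ℕ, 1 ≤ n ∧ 0 < (T ^ n) i j)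
    (ϖ : Fin ℓ → ℝ) (hϖ : ∀ k, 0 < ϖ k ∧ ϖ k ≤ 1) :
    IsUnit (Matrix.diagonal (fun k => Real.sqrt (ϖ k))
        * ((1 : Matrix (Fin ℓ) (Fin ℓ) ℝ) - γ • T)) ∧
    ((Matrix.diagonal (fun k => Real.sqrt (ϖ k))
        * ((1 : Matrix (Fin ℓ) (Fin ℓ) ℝ) - γ • T))ᵀ
      * (Matrix.diagonal (fun k => Real.sqrt (ϖ k))
        * ((1 : Matrix (Fin ℓ) (Fin ℓ) ℝ) - γ • T))).PosDef ∧
    (∀ i : Fin ℓ, 0 < (transpose_mul_self_isHermitian ℓ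
        (Matrix.diagonal (fun k => Real.sqrt (ϖ k))
          * ((1 : Matrix (Fin ℓ) (Fin ℓ) ℝ) - γ • T))).eigenvalues i) ∧
    (∃ i : Fin ℓ, (transpose_mul_self_isHermitian ℓ
        (Matrix.diagonal (fun k => Real.sqrt (ϖ k))
          * ((1 : Matrix (Fin ℓ) (Fin ℓ) ℝ) - γ • T))).eigenvalues i ≤ (1 - γ) ^ 2) :=
  stmt_18_general ℓ hℓ γ hγ T hTnonneg hTrow ϖ hϖ
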